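/- arXiv:cond-mat/0504413 — 6 statements merged into one kernel-verified Lean document; each statement's English description precedes it below -/
import Mathlib

section
/- (Cross-cut theorem, lower version) Let P be a finite lattice with bottom element 0̂ and top element 1̂, and let M be a lower cross-cut of P. For k ≥ 0 let n_k be the number of k-element subsets A ⊆ M with sup A = 1̂. Then μ_P(0̂,1̂) = Σ_{k ≥ 0} (-1)^k n_k. -/
open IncidenceAlgebra Finset

/-- Cross-cut theorem (lower version): if `M` is a lower cross-cut of a finite lattice `P`,
and `n_k` is the number of `k`-element subsets `A ⊆ M` with `sup A = ⊤`, then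
`μ_P(⊥, ⊤) = ∑_k (-1)^k n_k`. -/
theorem crosscut_lower
    (P : Type*) [Lattice P] [BoundedOrder P] [Fintype P] [DecidableEq P]
    [LocallyFiniteOrder P]
    (M : Finset P)
    (h0 : (⊥ : P) ∉ M)
    (hcross : ∀ x : P, x ≠ ⊥ → x ∉ M → ∃ y ∈ M, y ≤ x) :
    mu ℤ (⊥ : P) (⊤ : P) =
      ∑ k ∈ Finset.range (M.card + 1),
        (-1 : ℤ) ^ k *
          ((M.powerset.filter (fun A => A.card = k ∧ A.sup id = (⊤ : P))).card : ℤ) := by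
  classical
  set f : P → ℤ := fun x =>
    ∑ A ∈ M.powerset.filter (fun A => A.sup id = x), (-1:ℤ)^A.card with hf
  -- key summation identity for f
  have hsum : ∀ x : P, ∑ y ∈ Iic x, f y = if x = ⊥ then 1 else 0 := by
    intro x
    set s : Finset (Finset P) := M.powerset.filter (fun A => A.sup id ≤ x) with hs
    have h1 : ∑ y ∈ Iic x, f y = ∑ A ∈ s, (-1:ℤ)^A.card := by
      refine Eq.trans ?_ (Finset.sum_fiberwise_of_maps_to (s := s) (t := Iic x)
        (g := fun A => A.sup id)
        (fun A hA => Finset.mem_Iic.mpr (Finset.mem_filter.mp hA).2)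
        (fun A => (-1:ℤ)^A.card))
      refine Finset.sum_congr rfl fun y hy => ?_
      show (∑ A ∈ M.powerset.filter (fun A => A.sup id = y), (-1:ℤ)^A.card) = _
      refine Finset.sum_congr ?_ fun _ _ => rfl
      rw [hs, Finset.filter_filter]
      refine (Finset.filter_congr fun A _ => ?_).symm
      have hyx : y ≤ x := Finset.mem_Iic.mp hy
      constructor
      · rintro ⟨_, h⟩; exact h
      · intro h; exact ⟨h ▸ hyx, h⟩
    have h2 : s = (M.filter (fun a => a ≤ x)).powerset := by
      ext A
      constructor
      · intro hA
        rw [hs, Finset.mem_filter, Finset.mem_powerset] at hA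
        rw [Finset.mem_powerset]
        intro a ha
        exact Finset.mem_filter.mpr ⟨hA.1 ha, le_trans (Finset.le_sup (f := id) ha) hA.2⟩
      · intro hA
        rw [Finset.mem_powerset] at hA
        rw [hs, Finset.mem_filter, Finset.mem_powerset]
        exact ⟨fun a ha => (Finset.mem_filter.mp (hA ha)).1,
          Finset.sup_le fun a ha => (Finset.mem_filter.mp (hA ha)).2⟩
    rw [h1, h2, Finset.sum_powerset_neg_one_pow_card]
    refine if_congr ?_ rfl rfl
    constructor
    · intro he
      by_contra hx
      rcases (em (x ∈ M)) with hxM | hxM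
      · have : x ∈ M.filter (fun a => a ≤ x) := Finset.mem_filter.mpr ⟨hxM, le_rfl⟩
        simp [he] at this
      · obtain ⟨y, hyM, hyx⟩ := hcross x hx hxM
        have : y ∈ M.filter (fun a => a ≤ x) := Finset.mem_filter.mpr ⟨hyM, hyx⟩
        simp [he] at this
    · intro hx
      subst hx
      refine Finset.filter_eq_empty_iff.mpr fun {a} ha hle => ?_
      exact h0 (le_bot_iff.mp hle ▸ ha)
  -- f equals the Möbius function by induction
  have hmu : ∀ x : P, f x = mu ℤ ⊥ x := by
    intro x
    induction x using WellFoundedLT.induction with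
    | ind x ih =>
      have e1 := hsum x
      have e2 : ∑ y ∈ Iic x, mu ℤ (⊥ : P) y = if x = ⊥ then 1 else 0 := by
        have := sum_Icc_mu_right (𝕜 := ℤ) (⊥ : P) x
        rw [show Finset.Icc (⊥ : P) x = Finset.Iic x from by ext y; simp] at this
        rw [this]
        simp [eq_comm]
      rw [← Finset.Iio_insert, Finset.sum_insert (by simp)] at e1 e2
      have e3 : ∑ y ∈ Iio x, f y = ∑ y ∈ Iio x, mu ℤ (⊥ : P) y :=
        Finset.sum_congr rfl fun y hy => ih y (Finset.mem_Iio.mp hy)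
      omega
  -- conclude
  have hfin : f ⊤ = ∑ k ∈ Finset.range (M.card + 1),
      (-1 : ℤ) ^ k *
        ((M.powerset.filter (fun A => A.card = k ∧ A.sup id = (⊤ : P))).card : ℤ) := by
    show ∑ A ∈ M.powerset.filter (fun A => A.sup id = (⊤ : P)), (-1:ℤ)^A.card = _
    refine Eq.trans (Finset.sum_fiberwise_of_maps_to (t := Finset.range (M.card + 1))
      (g := fun A : Finset P => A.card)
      (s := M.powerset.filter (fun A => A.sup id = (⊤ : P)))
      (fun A hA => Finset.mem_range.mpr (Nat.lt_succ_of_le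
        (Finset.card_le_card (Finset.mem_powerset.mp (Finset.mem_filter.mp hA).1))))
      (fun A => (-1:ℤ)^A.card)).symm ?_
    refine Finset.sum_congr rfl fun k _ => ?_
    rw [Finset.filter_filter]
    have hset : ((M.powerset.filter fun A => A.sup id = (⊤:P) ∧ A.card = k))
        = (M.powerset.filter fun A => A.card = k ∧ A.sup id = (⊤:P)) := by
      refine Finset.filter_congr fun A _ => ?_
      constructor <;> (rintro ⟨h1, h2⟩; exact ⟨h2, h1⟩)
    rw [hset]
    rw [Finset.sum_congr rfl (fun A hA => by
      rw [(Finset.mem_filter.mp hA).2.1]), Finset.sum_const, nsmul_eq_mul, mul_comm]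
  rw [← hmu, hfin]
end

section
/- (Cross-cut theorem, upper version) Let P be a finite lattice with bottom 0̂ and top 1̂, and let M be an upper cross-cut of P. For k ≥ 0 let n_k be the number of k-element subsets A ⊆ M with inf A = 0̂. Then μ_P(0̂,1̂) = Σ_{k ≥ 0} (-1)^k n_k. -/
open IncidenceAlgebra Finset

/-- Cross-cut theorem (upper version): if `M` is an upper cross-cut of a finite lattice `P`,
and `n_k` is the number of `k`-element subsets `A ⊆ M` with `inf A = ⊥`, then
`μ_P(⊥, ⊤) = ∑_k (-1)^k n_k`. -/
theorem crosscut_upper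
    (P : Type*) [Lattice P] [BoundedOrder P] [Fintype P] [DecidableEq P]
    [LocallyFiniteOrder P]
    (M : Finset P)
    (h1 : (⊤ : P) ∉ M)
    (hcross : ∀ x : P, x ≠ ⊤ → x ∉ M → ∃ y ∈ M, x ≤ y) :
    mu ℤ (⊥ : P) (⊤ : P) =
      ∑ k ∈ Finset.range (M.card + 1),
        (-1 : ℤ) ^ k *
          ((M.powerset.filter (fun A => A.card = k ∧ A.inf id = (⊥ : P))).card : ℤ) := by
  classical
  set f : P → ℤ := fun x =>
    ∑ A ∈ M.powerset.filter (fun A => A.inf id = x), (-1 : ℤ) ^ A.card with hf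
  set g : P → ℤ := fun x =>
    ∑ A ∈ M.powerset.filter (fun A => x ≤ A.inf id), (-1 : ℤ) ^ A.card with hg
  -- g as indicator of ⊤
  have hgval : ∀ x : P, g x = if x = ⊤ then 1 else 0 := by
    intro x
    have hfilt : M.powerset.filter (fun A => x ≤ A.inf id)
        = (M.filter (fun y => x ≤ y)).powerset := by
      ext A
      simp only [mem_filter, mem_powerset, Finset.subset_iff, Finset.le_inf_iff, id]
      exact ⟨fun h a ha => ⟨h.1 ha, h.2 a ha⟩,
             fun h => ⟨fun a ha => (h ha).1, fun a ha => (h ha).2⟩⟩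
    have hmem : (M.filter (fun y => x ≤ y)) = ∅ ↔ x = ⊤ := by
      constructor
      · intro he
        by_contra hx
        rcases (em (x ∈ M)) with hxM | hxM
        · have : x ∈ M.filter (fun y => x ≤ y) := mem_filter.mpr ⟨hxM, le_rfl⟩
          simp [he] at this
        · obtain ⟨y, hy, hxy⟩ := hcross x hx hxM
          have : y ∈ M.filter (fun y => x ≤ y) := mem_filter.mpr ⟨hy, hxy⟩
          simp [he] at this
      · intro hx
        subst hx
        ext y
        simp only [mem_filter, Finset.notMem_empty, iff_false, not_and, top_le_iff]
        rintro hy rfl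
        exact h1 hy
    rw [hg]
    simp only [hfilt]
    rw [Finset.sum_powerset_neg_one_pow_card]
    simp [hmem]
  -- g x = ∑_{y ≥ x} f y
  have hsum : ∀ x : P, g x = ∑ y ∈ Finset.Ici x, f y := by
    intro x
    have hfy : ∀ y : P, f y = ∑ A ∈ M.powerset, if A.inf id = y then (-1 : ℤ) ^ A.card else 0 :=
      fun y => Finset.sum_filter _ _
    calc g x = ∑ A ∈ M.powerset, if x ≤ A.inf id then (-1 : ℤ) ^ A.card else 0 :=
          Finset.sum_filter _ _
      _ = ∑ A ∈ M.powerset, ∑ y ∈ Finset.Ici x, if A.inf id = y then (-1 : ℤ) ^ A.card else 0 := by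
          refine Finset.sum_congr rfl fun A _ => ?_
          rw [Finset.sum_ite_eq (Finset.Ici x) (A.inf id)]
          simp [Finset.mem_Ici]
      _ = ∑ y ∈ Finset.Ici x, f y := by
          rw [Finset.sum_comm]
          exact Finset.sum_congr rfl fun y _ => (hfy y).symm
  -- Möbius inversion
  have hinv := moebius_inversion_top f g hsum (⊥ : P)
  have hmu : f ⊥ = mu ℤ (⊥ : P) (⊤ : P) := by
    rw [hinv]
    rw [Finset.sum_eq_single (⊤ : P)]
    · rw [hgval]; simp
    · intro y _ hy
      rw [hgval, if_neg hy, mul_zero]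
    · intro h
      exact absurd (Finset.mem_Ici.mpr bot_le) h
  rw [← hmu, hf]
  -- reorganize the RHS sum by cardinality
  have hcard : ∀ k, ((M.powerset.filter (fun A => A.card = k ∧ A.inf id = (⊥ : P))).card : ℤ)
      = ∑ A ∈ (M.powerset.filter (fun A => A.inf id = (⊥ : P))).filter (fun A => A.card = k),
          (1 : ℤ) := by
    intro k
    rw [Finset.sum_const, nsmul_eq_mul, mul_one]
    congr 2
    rw [Finset.filter_filter]
    apply Finset.filter_congr
    intro A _
    tauto
  have : ∑ k ∈ Finset.range (M.card + 1),
      (-1 : ℤ) ^ k * ((M.powerset.filter (fun A => A.card = k ∧ A.inf id = (⊥ : P))).card : ℤ)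
      = ∑ k ∈ Finset.range (M.card + 1),
          ∑ A ∈ (M.powerset.filter (fun A => A.inf id = (⊥ : P))).filter (fun A => A.card = k),
            (-1 : ℤ) ^ A.card := by
    refine Finset.sum_congr rfl fun k _ => ?_
    rw [hcard, Finset.mul_sum]
    refine Finset.sum_congr rfl fun A hA => ?_
    rw [(Finset.mem_filter.mp hA).2, mul_one]
  rw [this]
  rw [Finset.sum_fiberwise_of_maps_to]
  intro A hA
  rw [Finset.mem_range, Nat.lt_succ_iff]
  exact Finset.card_le_card (Finset.mem_powerset.mp (Finset.mem_filter.mp hA).1)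
end

section
/- Let P be a finite lattice with bottom 0̂ and top 1̂, let Q be the set of atoms (points) of P and R the set of coatoms (copoints). If 1̂ ≠ sup Q, then μ_P(0̂,1̂) = 0. Dually, if 0̂ ≠ inf R, then μ_P(0̂,1̂) = 0. -/
/-!
Write `μ(a, x) = -∑_{a ≤ y < x} μ(a, y)`. Suppose every cover of `a` below `x` lies below some
`s < x` with `a ≤ s`. Then `a < s`, so the terms with `y ≤ s` add up to `∑_{[a, s]} μ(a, ·) = 0`,
and every other `y` satisfies the same hypothesis with `s ⊓ y < y` in place of `s`, so its term
vanishes by induction. For `a = ⊥`, `x = ⊤` take `s` the join of the atoms; the coatom statement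
is the dual one.
-/

open IncidenceAlgebra Finset OrderDual

namespace IncidenceAlgebra

variable {𝕜 α : Type*} [Lattice α] [LocallyFiniteOrder α] [DecidableEq α]

theorem mu_eq_zero_of_forall_covBy_le [AddCommGroup 𝕜] [One 𝕜] {a s x : α} (has : a ≤ s)
    (hsx : s < x) (hcov : ∀ y, a ⋖ y → y ≤ x → y ≤ s) : mu 𝕜 a x = 0 := by
  induction hn : #(Icc a x) using Nat.strong_induction_on generalizing s x with
  | _ n ih =>
    have hax : a < x := has.trans_lt hsx
    obtain ⟨z, haz, hzx⟩ := exists_covBy_le_of_lt hax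
    have has' : a < s := haz.lt.trans_le (hcov z haz hzx)
    have hvanish : ∀ y ∈ Ico a x, y ∉ Icc a s → mu 𝕜 a y = 0 := by
      intro y hy hys
      rw [mem_Ico] at hy
      have hys : ¬y ≤ s := fun h => hys (mem_Icc.2 ⟨hy.1, h⟩)
      exact ih _ (hn ▸ card_lt_card (Icc_ssubset_Icc_right hax.le le_rfl hy.2))
        (le_inf has hy.1) (inf_lt_right.2 hys)
        (fun w haw hwy => le_inf (hcov w haw (hwy.trans hy.2.le)) hwy) rfl
    calc mu 𝕜 a x = -∑ y ∈ Ico a x, mu 𝕜 a y := mu_eq_neg_sum_Ico_of_ne hax.ne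
      _ = -∑ y ∈ Icc a s, mu 𝕜 a y := by rw [sum_subset (Icc_subset_Ico_right hsx) hvanish]
      _ = 0 := by rw [sum_Icc_mu_right, if_neg has'.ne, neg_zero]

theorem mu_eq_zero_of_forall_covBy_ge [Ring 𝕜] {a s x : α} (hsx : s ≤ x) (has : a < s)
    (hcov : ∀ y, y ⋖ x → a ≤ y → s ≤ y) : mu 𝕜 a x = 0 := by
  rw [← mu_toDual]
  exact mu_eq_zero_of_forall_covBy_le (s := toDual s) hsx has
    fun y hy hya => hcov (ofDual y) (ofDual_covBy_ofDual_iff.2 hy) hya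

end IncidenceAlgebra

open scoped Classical in
/-- In a finite lattice `P` with atom set `Q` and coatom set `R`: if `⊤ ≠ sup Q` then
`μ_P(⊥,⊤) = 0`, and dually if `⊥ ≠ inf R` then `μ_P(⊥,⊤) = 0`. -/
theorem mu_eq_zero_of_not_sup_atoms_or_not_inf_coatoms
    (P : Type*) [Lattice P] [BoundedOrder P] [Fintype P] [DecidableEq P]
    [LocallyFiniteOrder P] :
    ((⊤ : P) ≠ (univ.filter (fun a : P => IsAtom a)).sup id → mu ℤ (⊥ : P) (⊤ : P) = 0) ∧
    ((⊥ : P) ≠ (univ.filter (fun a : P => IsCoatom a)).inf id → mu ℤ (⊥ : P) (⊤ : P) = 0) := by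
  refine ⟨fun h => ?_, fun h => ?_⟩
  · refine mu_eq_zero_of_forall_covBy_le bot_le (lt_top_iff_ne_top.2 h.symm) fun y hy _ => ?_
    exact le_sup (f := id) (mem_filter.2 ⟨mem_univ y, bot_covBy_iff.1 hy⟩)
  · refine mu_eq_zero_of_forall_covBy_ge le_top (bot_lt_iff_ne_bot.2 h.symm) fun y hy _ => ?_
    exact inf_le (f := id) (mem_filter.2 ⟨mem_univ y, covBy_top_iff.1 hy⟩)
end

section
/- Let L be a finite set, W_max a family of proper nonempty subsets of L, and W the poset (ordered by inclusion) consisting of L together with all nonempty intersections of members of W_max. Let L' ⊆ L be any nonempty subset, and let W' be the poset of all nonempty intersections C ∩ L' for C ∈ W. Then for every C' ∈ W': Σ_{C ∈ W, C ∩ L' = C'} μ_W(C, L) equals μ_{W'}(C', L') if L' is not contained in any member of W \ {L}, and equals 0 if L' ⊆ D for some D ∈ W \ {L}. -/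
open Finset

variable {α : Type*} [DecidableEq α]

/-- `μ` is the Möbius function of the cluster poset `W` (ordered by inclusion, with top
element `top`) at fixed second argument `top`. -/
def IsMobiusTop (W : Finset (Finset α)) (top : Finset α) (μ : Finset α → ℤ) : Prop :=
  μ top = 1 ∧
    ∀ C ∈ W, C ⊂ top → ∑ Z ∈ W.filter (fun Z => C ⊆ Z ∧ Z ⊆ top), μ Z = 0

/-- Dimensional-reduction identity for the Möbius coefficients: with `W` the
intersection-closed poset generated by `W_max` with top `L`, `L' ⊆ L` nonempty, and
`W'` the poset of nonempty intersections `C ∩ L'` for `C ∈ W`, one has for every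
`C' ∈ W'`: `∑_{C ∈ W, C ∩ L' = C'} μ_W(C, L)` equals `μ_{W'}(C', L')` if `L'` is
contained in no member of `W \ {L}`, and equals `0` otherwise. -/
theorem sum_mu_dimensional_reduction
    (L L' : Finset α) (Wmax W W' : Finset (Finset α)) (μ μ' : Finset α → ℤ)
    (hmax : ∀ D ∈ Wmax, D.Nonempty ∧ D ⊂ L)
    (hW : ∀ C : Finset α, C ∈ W ↔ C = L ∨
      (C.Nonempty ∧ ∃ S : Finset (Finset α), S ⊆ Wmax ∧ S.Nonempty ∧
        ∀ x, x ∈ C ↔ ∀ D ∈ S, x ∈ D))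
    (hL' : L' ⊆ L) (hL'ne : L'.Nonempty)
    (hW' : ∀ C' : Finset α, C' ∈ W' ↔ C'.Nonempty ∧ ∃ C ∈ W, C' = C ∩ L')
    (hμ : IsMobiusTop W L μ) (hμ' : IsMobiusTop W' L' μ')
    (C' : Finset α) (hC' : C' ∈ W') :
    ∑ C ∈ W.filter (fun C => C ∩ L' = C'), μ C =
      if ∃ D ∈ W, D ≠ L ∧ L' ⊆ D then 0 else μ' C' := by
  classical
  have hLmem : L ∈ W := (hW L).mpr (Or.inl rfl)
  have hWsub : ∀ C ∈ W, C ⊆ L := by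
    intro C hC
    rcases (hW C).mp hC with rfl | ⟨hne, S, hS, hSne, hchar⟩
    · exact subset_rfl
    · obtain ⟨D, hD⟩ := hSne
      intro x hx
      exact (hmax D (hS hD)).2.subset ((hchar x).mp hx D hD)
  have hW'sub : ∀ Z ∈ W', Z ⊆ L' := by
    intro Z hZ
    obtain ⟨hne, C, hC, rfl⟩ := (hW' Z).mp hZ
    exact inter_subset_right
  have hW'ne : ∀ Z ∈ W', Z.Nonempty := fun Z hZ => ((hW' Z).mp hZ).1
  have hL'mem : L' ∈ W' :=
    (hW' L').mpr ⟨hL'ne, L, hLmem, (inter_eq_right.mpr hL').symm⟩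
  -- closure under intersections
  have hinter : ∀ C₁ ∈ W, ∀ C₂ ∈ W, (C₁ ∩ C₂).Nonempty → C₁ ∩ C₂ ∈ W := by
    intro C₁ h₁ C₂ h₂ hne
    rcases (hW C₁).mp h₁ with rfl | ⟨hne₁, S₁, hS₁, hS₁ne, hchar₁⟩
    · rwa [inter_eq_right.mpr (hWsub C₂ h₂)]
    · rcases (hW C₂).mp h₂ with rfl | ⟨hne₂, S₂, hS₂, hS₂ne, hchar₂⟩
      · rwa [inter_eq_left.mpr (hWsub C₁ h₁)]
      · refine (hW _).mpr (Or.inr ⟨hne, S₁ ∪ S₂, union_subset hS₁ hS₂,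
          hS₁ne.mono subset_union_left, ?_⟩)
        intro x
        simp only [mem_inter, hchar₁ x, hchar₂ x, mem_union]
        constructor
        · rintro ⟨a, b⟩ D hD
          rcases hD with h | h
          exacts [a D h, b D h]
        · intro h
          exact ⟨fun D hD => h D (Or.inl hD), fun D hD => h D (Or.inr hD)⟩
  -- infimum of a nonempty family of members of W all containing a nonempty set
  have hinf : ∀ T : Finset (Finset α), ∀ Q : Finset α, Q.Nonempty → T.Nonempty →
      (∀ A ∈ T, A ∈ W ∧ Q ⊆ A) → ∃ C₀ ∈ W, Q ⊆ C₀ ∧ ∀ A ∈ T, C₀ ⊆ A := by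
    intro T
    induction T using Finset.induction_on with
    | empty => intro Q _ h; exact absurd h (by simp)
    | @insert a T ha ih =>
      intro Q hQne _ hall
      rcases T.eq_empty_or_nonempty with rfl | hTne
      · refine ⟨a, (hall a (mem_insert_self _ _)).1, (hall a (mem_insert_self _ _)).2, ?_⟩
        intro A hA
        have : A = a := by simpa using hA
        subst this; exact subset_rfl
      · obtain ⟨C₀, hC₀W, hC₀Q, hC₀le⟩ := ih Q hQne hTne
          (fun A hA => hall A (mem_insert_of_mem hA))
        have haW := hall a (mem_insert_self _ _)
        have hsub : Q ⊆ a ∩ C₀ := subset_inter haW.2 hC₀Q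
        have hne : (a ∩ C₀).Nonempty := hQne.mono hsub
        refine ⟨a ∩ C₀, hinter a haW.1 C₀ hC₀W hne, hsub, ?_⟩
        intro A hA
        rcases mem_insert.mp hA with rfl | hA
        · exact inter_subset_left
        · exact inter_subset_right.trans (hC₀le A hA)
  -- value of the "upper sum" in W
  have hg : ∀ Q : Finset α, Q.Nonempty → Q ⊆ L' →
      ∑ C ∈ W.filter (fun C => Q ⊆ C), μ C =
        if ∃ D ∈ W, D ≠ L ∧ Q ⊆ D then 0 else 1 := by
    intro Q hne hsub
    have hLT : L ∈ W.filter (fun C => Q ⊆ C) :=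
      mem_filter.mpr ⟨hLmem, hsub.trans hL'⟩
    obtain ⟨C₀, hC₀W, hC₀Q, hC₀le⟩ := hinf (W.filter (fun C => Q ⊆ C)) Q hne ⟨L, hLT⟩
      (fun A hA => ⟨(mem_filter.mp hA).1, (mem_filter.mp hA).2⟩)
    split_ifs with h
    · obtain ⟨D, hDW, hDL, hQD⟩ := h
      have hDT : D ∈ W.filter (fun C => Q ⊆ C) := mem_filter.mpr ⟨hDW, hQD⟩
      have hC₀L : C₀ ⊂ L :=
        (hC₀le D hDT).trans_ssubset (Finset.ssubset_iff_subset_ne.mpr ⟨hWsub D hDW, hDL⟩)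
      have hrec := hμ.2 C₀ hC₀W hC₀L
      rw [← hrec]
      apply sum_congr _ (fun _ _ => rfl)
      ext Z
      simp only [mem_filter]
      constructor
      · rintro ⟨hZW, hQZ⟩
        exact ⟨hZW, hC₀le Z (mem_filter.mpr ⟨hZW, hQZ⟩), hWsub Z hZW⟩
      · rintro ⟨hZW, hC₀Z, _⟩
        exact ⟨hZW, hC₀Q.trans hC₀Z⟩
    · have hTeq : W.filter (fun C => Q ⊆ C) = {L} := by
        apply Subset.antisymm
        · intro A hA
          rcases mem_filter.mp hA with ⟨hAW, hQA⟩
          simp only [mem_singleton]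
          by_contra hne'
          exact h ⟨A, hAW, hne', hQA⟩
        · simpa using hLT
      rw [hTeq, sum_singleton, hμ.1]
  -- regrouping by fibers of C ↦ C ∩ L'
  have hregroup : ∀ Q ∈ W',
      ∑ Z' ∈ W'.filter (fun Z' => Q ⊆ Z'),
        ∑ C ∈ W.filter (fun C => C ∩ L' = Z'), μ C =
      ∑ C ∈ W.filter (fun C => Q ⊆ C), μ C := by
    intro Q hQW'
    have hQne := hW'ne Q hQW'
    have hQL' := hW'sub Q hQW'
    have hmaps : ∀ C ∈ W.filter (fun C => Q ⊆ C),
        C ∩ L' ∈ W'.filter (fun Z' => Q ⊆ Z') := by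
      intro C hC
      rcases mem_filter.mp hC with ⟨hCW, hQC⟩
      have hsub : Q ⊆ C ∩ L' := subset_inter hQC hQL'
      exact mem_filter.mpr ⟨(hW' _).mpr ⟨hQne.mono hsub, C, hCW, rfl⟩, hsub⟩
    rw [← Finset.sum_fiberwise_of_maps_to hmaps μ]
    apply sum_congr rfl
    intro Z' hZ'
    rcases mem_filter.mp hZ' with ⟨hZ'W', hQZ'⟩
    apply sum_congr _ (fun _ _ => rfl)
    rw [filter_filter]
    ext C
    simp only [mem_filter]
    constructor
    · rintro ⟨hCW, hfib⟩
      exact ⟨hCW, (subset_inter_iff.mp (hfib ▸ hQZ')).1, hfib⟩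
    · rintro ⟨hCW, _, hfib⟩
      exact ⟨hCW, hfib⟩
  -- main induction on the size of L' \ C'
  have key : ∀ n : ℕ, ∀ Q ∈ W', (L' \ Q).card = n →
      ∑ C ∈ W.filter (fun C => C ∩ L' = Q), μ C =
        if ∃ D ∈ W, D ≠ L ∧ L' ⊆ D then 0 else μ' Q := by
    intro n
    induction n using Nat.strong_induction_on with
    | _ n ih =>
      intro Q hQW' hcard
      have hQL' := hW'sub Q hQW'
      have hQne := hW'ne Q hQW'
      have hQmem : Q ∈ W'.filter (fun Z' => Q ⊆ Z') :=
        mem_filter.mpr ⟨hQW', subset_rfl⟩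
      have hsplit := Finset.add_sum_erase (W'.filter (fun Z' => Q ⊆ Z'))
        (fun Z' => ∑ C ∈ W.filter (fun C => C ∩ L' = Z'), μ C) hQmem
      rw [hregroup Q hQW', hg Q hQne hQL'] at hsplit
      have hE : ∀ Z' ∈ (W'.filter (fun Z' => Q ⊆ Z')).erase Q,
          ∑ C ∈ W.filter (fun C => C ∩ L' = Z'), μ C =
            if ∃ D ∈ W, D ≠ L ∧ L' ⊆ D then 0 else μ' Z' := by
        intro Z' hZ'
        have hZ'mem := mem_of_mem_erase hZ'
        rcases mem_filter.mp hZ'mem with ⟨hZ'W', hQZ'⟩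
        have hZ'ne := ne_of_mem_erase hZ'
        have hZL' := hW'sub Z' hZ'W'
        have hlt : (L' \ Z').card < (L' \ Q).card := by
          apply card_lt_card
          rw [Finset.ssubset_iff_subset_ne]
          constructor
          · exact sdiff_subset_sdiff subset_rfl hQZ'
          · obtain ⟨x, hxZ, hxQ⟩ := exists_of_ssubset
              (Finset.ssubset_iff_subset_ne.mpr ⟨hQZ', Ne.symm hZ'ne⟩)
            intro hEq
            have hx1 : x ∈ L' \ Q := mem_sdiff.mpr ⟨hZL' hxZ, hxQ⟩
            rw [← hEq] at hx1
            exact (mem_sdiff.mp hx1).2 hxZ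
        exact ih _ (by omega) Z' hZ'W' rfl
      rw [Finset.sum_congr rfl hE] at hsplit
      by_cases hcond : ∃ D ∈ W, D ≠ L ∧ L' ⊆ D
      · simp only [if_pos hcond] at hsplit ⊢
        have hgval : (if ∃ D ∈ W, D ≠ L ∧ Q ⊆ D then (0 : ℤ) else 1) = 0 := by
          rw [if_pos]
          obtain ⟨D, hD, hDL, hsub⟩ := hcond
          exact ⟨D, hD, hDL, hQL'.trans hsub⟩
        rw [hgval, sum_const_zero] at hsplit
        linarith
      · simp only [if_neg hcond] at hsplit ⊢
        -- compute the indicator value of hg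
        have hgval : (if ∃ D ∈ W, D ≠ L ∧ Q ⊆ D then (0 : ℤ) else 1) =
            if Q = L' then 1 else 0 := by
          by_cases hQ : Q = L'
          · subst hQ
            rw [if_neg hcond, if_pos rfl]
          · obtain ⟨hne, C, hCW, rfl⟩ := (hW' Q).mp hQW'
            have hCL : C ≠ L := by
              rintro rfl
              exact hQ (inter_eq_right.mpr hL')
            rw [if_pos ⟨C, hCW, hCL, inter_subset_left⟩, if_neg hQ]
        rw [hgval] at hsplit
        -- recursion for μ'
        have hμ'rec : μ' Q + ∑ Z' ∈ (W'.filter (fun Z' => Q ⊆ Z')).erase Q, μ' Z' =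
            if Q = L' then 1 else 0 := by
          rw [Finset.add_sum_erase (W'.filter (fun Z' => Q ⊆ Z')) μ' hQmem]
          by_cases hQ : Q = L'
          · subst hQ
            have hTeq : W'.filter (fun Z' => Q ⊆ Z') = {Q} := by
              apply Subset.antisymm
              · intro A hA
                rcases mem_filter.mp hA with ⟨hAW', hQA⟩
                simp only [mem_singleton]
                exact Subset.antisymm (hW'sub A hAW') hQA
              · simpa using hQmem
            rw [hTeq, sum_singleton, hμ'.1, if_pos rfl]
          · have hss : Q ⊂ L' := Finset.ssubset_iff_subset_ne.mpr ⟨hQL', hQ⟩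
            have hrec := hμ'.2 Q hQW' hss
            rw [if_neg hQ, ← hrec]
            apply sum_congr _ (fun _ _ => rfl)
            ext Z
            simp only [mem_filter]
            constructor
            · rintro ⟨hZW', hQZ⟩
              exact ⟨hZW', hQZ, hW'sub Z hZW'⟩
            · rintro ⟨hZW', hQZ, _⟩
              exact ⟨hZW', hQZ⟩
        linarith
  exact key ((L' \ C').card) C' hC' rfl
end

section
/- Let L be a finite set, W_max a family of subsets of L, and W the poset of L together with all nonempty intersections of members of W_max, ordered by inclusion. Suppose real coefficients a : W \ {L} → ℝ satisfy a(D) = 1 for all D ∈ W_max and Σ_{C ∈ W\{L}, C ∩ D = E} a(C) = Σ_{C ∩ D = E} δ_{C,L} for all D ∈ W_max and all E ⊊ D (i.e., extending by a(L) := -1, Σ_{C ∈ W, C∩D = E} a(C) = 0 for all D ∈ W_max and E ⊊ L). Then a(C) = -μ_W(C, L) for all C ∈ W \ {L}. In particular such a solution is unique. -/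
open Finset

variable {α : Type*} [DecidableEq α]

/-- Uniqueness of the cluster-expansion coefficients: if real coefficients `a` on `W`
satisfy `a D = 1` for `D ∈ W_max`, `a L = -1`, and `∑_{C ∈ W, C ∩ D = E} a C = 0` for all
`D ∈ W_max` and all nonempty `E ⊊ L`, then `a C = -μ_W(C, L)` for all `C ∈ W \ {L}`. -/
theorem cluster_coefficients_unique
    (L : Finset α) (Wmax W : Finset (Finset α)) (μ : Finset α → ℤ) (a : Finset α → ℝ)
    (hmax : ∀ D ∈ Wmax, D.Nonempty ∧ D ⊂ L)
    (hW : ∀ C : Finset α, C ∈ W ↔ C = L ∨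
      (C.Nonempty ∧ ∃ S : Finset (Finset α), S ⊆ Wmax ∧ S.Nonempty ∧
        ∀ x, x ∈ C ↔ ∀ D ∈ S, x ∈ D))
    (hμ : IsMobiusTop W L μ)
    (ha1 : ∀ D ∈ Wmax, a D = 1)
    (haL : a L = -1)
    (ha0 : ∀ D ∈ Wmax, ∀ E : Finset α, E ⊂ L → E.Nonempty →
      ∑ C ∈ W.filter (fun C => C ∩ D = E), a C = 0) :
    ∀ C ∈ W, C ≠ L → a C = -(μ C : ℝ) := by
  obtain ⟨hμL, hμ0⟩ := hμ
  -- every element of W is a subset of L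
  have hsubL : ∀ Z ∈ W, Z ⊆ L := by
    intro Z hZ
    rcases (hW Z).1 hZ with rfl | ⟨_, S, hSW, ⟨D, hDS⟩, hiff⟩
    · exact Finset.Subset.refl _
    · intro x hx
      exact (hmax D (hSW hDS)).2.subset ((hiff x).1 hx D hDS)
  have hssub : ∀ Z ∈ W, Z ≠ L → Z ⊂ L := fun Z hZ hne =>
    (hsubL Z hZ).ssubset_of_ne hne
  have hnon : ∀ Z ∈ W, Z ≠ L → Z.Nonempty := by
    intro Z hZ hZL
    rcases (hW Z).1 hZ with rfl | ⟨h, _⟩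
    · exact absurd rfl hZL
    · exact h
  have hexD : ∀ C ∈ W, C ≠ L → ∃ D ∈ Wmax, C ⊆ D := by
    intro C hC hCL
    rcases (hW C).1 hC with rfl | ⟨_, S, hSW, ⟨D, hDS⟩, hiff⟩
    · exact absurd rfl hCL
    · exact ⟨D, hSW hDS, fun x hx => (hiff x).1 hx D hDS⟩
  -- key: the sum of a over the up-set of C in W is 0
  have key : ∀ C ∈ W, C ≠ L →
      ∑ Z ∈ W.filter (fun Z => C ⊆ Z ∧ Z ⊆ L), a Z = 0 := by
    intro C hC hCL
    obtain ⟨D, hDmax, hCD⟩ := hexD C hC hCL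
    have hmaps : ∀ Z ∈ W.filter (fun Z => C ⊆ Z ∧ Z ⊆ L),
        Z ∩ D ∈ (W.filter (fun Z => C ⊆ Z ∧ Z ⊆ L)).image (fun Z => Z ∩ D) :=
      fun Z hZ => mem_image_of_mem _ hZ
    rw [← Finset.sum_fiberwise_of_maps_to hmaps a]
    apply Finset.sum_eq_zero
    intro E hE
    obtain ⟨Z₀, hZ₀, rfl⟩ := mem_image.1 hE
    obtain ⟨hZ₀W, hCZ₀, hZ₀L⟩ := mem_filter.1 hZ₀
    have hCE : C ⊆ Z₀ ∩ D := subset_inter hCZ₀ hCD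
    have hfeq : (W.filter (fun Z => C ⊆ Z ∧ Z ⊆ L)).filter (fun Z => Z ∩ D = Z₀ ∩ D)
        = W.filter (fun Z => Z ∩ D = Z₀ ∩ D) := by
      ext Z
      simp only [mem_filter, and_assoc]
      constructor
      · tauto
      · rintro ⟨h1, h2⟩
        refine ⟨h1, ?_, hsubL Z h1, h2⟩
        intro x hx
        have : x ∈ Z ∩ D := by rw [h2]; exact hCE hx
        exact (mem_inter.1 this).1
    rw [hfeq]
    apply ha0 D hDmax
    · exact Finset.ssubset_of_subset_of_ssubset inter_subset_right (hmax D hDmax).2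
    · obtain ⟨x, hx⟩ := hnon C hC hCL
      exact ⟨x, hCE hx⟩
  -- main induction on |L \ C|
  suffices H : ∀ n : ℕ, ∀ C ∈ W, C ≠ L → (L \ C).card ≤ n → a C = -(μ C : ℝ) by
    intro C hC hCL
    exact H _ C hC hCL le_rfl
  intro n
  induction n using Nat.strong_induction_on with
  | _ n IH =>
    intro C hC hCL hcard
    have hCT : C ∈ W.filter (fun Z => C ⊆ Z ∧ Z ⊆ L) :=
      mem_filter.2 ⟨hC, Finset.Subset.refl _, hsubL C hC⟩
    have hsum : ∑ Z ∈ W.filter (fun Z => C ⊆ Z ∧ Z ⊆ L), (a Z + (μ Z : ℝ)) = 0 := by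
      rw [Finset.sum_add_distrib, key C hC hCL, zero_add]
      exact_mod_cast hμ0 C hC (hssub C hC hCL)
    rw [← Finset.add_sum_erase _ _ hCT] at hsum
    have hrest : ∑ Z ∈ (W.filter (fun Z => C ⊆ Z ∧ Z ⊆ L)).erase C,
        (a Z + (μ Z : ℝ)) = 0 := by
      apply Finset.sum_eq_zero
      intro Z hZ
      obtain ⟨hZC, hZT⟩ := mem_erase.1 hZ
      obtain ⟨hZW, hCZ, hZL⟩ := mem_filter.1 hZT
      by_cases hZeq : Z = L
      · subst hZeq
        rw [haL, hμL]
        norm_num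
      · have hlt : (L \ Z).card < n := by
          have hCsZ : C ⊂ Z := hCZ.ssubset_of_ne (Ne.symm hZC)
          have e1 := Finset.card_sdiff_of_subset hZL
          have e2 := Finset.card_sdiff_of_subset (hsubL C hC)
          have e3 := Finset.card_lt_card hCsZ
          have e4 := Finset.card_le_card hZL
          omega
        have h1 : a Z = -(μ Z : ℝ) := IH _ hlt Z hZW hZeq le_rfl
        rw [h1]
        ring
    rw [hrest, add_zero] at hsum
    linarith
end

section
/- Let W be a finite poset of subsets of a finite set L (ordered by inclusion) closed under nonempty intersection and containing L as top element. Let V be a real vector space and for each C ∈ W let F_C ∈ V be given, and suppose the family satisfies the 'restriction' property with respect to a distinguished D ∈ W: there is a function ρ ↦ F_C[ρ] linear in the data such that F_C[ρ_D] = F_{C∩D}[ρ_D] for a profile ρ_D supported on D. Then the truncated expansion F_app[ρ] = Σ_{C < L} [-μ_W(C,L)] F_C[ρ] satisfies F_app[ρ_D] = F_D[ρ_D] for every maximal element D of W \ {L}. -/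
open Finset

variable {α : Type*} [DecidableEq α]

/-- Exactness of the truncated cluster expansion on maximal clusters: let `W` be a finite
intersection-closed family of subsets of `L` with top element `L`, `Φ : Finset α → V` any
assignment into a real vector space with `Φ ∅ = 0` (the restriction property
`F_C[ρ_D] = F_{C∩D}[ρ_D]` is encoded by evaluating `Φ` at `C ∩ D`). Then for every maximal
element `D` of `W \ {L}`: `∑_{C ∈ W, C ⊊ L} [-μ_W(C,L)] • Φ(C ∩ D) = Φ D`. -/
theorem truncated_expansion_exact_on_maximal
    (L : Finset α) (W : Finset (Finset α)) (μ : Finset α → ℤ)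
    (V : Type*) [AddCommGroup V] [Module ℝ V] (Φ : Finset α → V)
    (hL : L ∈ W) (hsub : ∀ C ∈ W, C ⊆ L)
    (hclosed : ∀ C ∈ W, ∀ C' ∈ W, (C ∩ C').Nonempty → C ∩ C' ∈ W)
    (hμ : IsMobiusTop W L μ)
    (hΦ : Φ ∅ = 0)
    (D : Finset α) (hD : D ∈ W) (hDL : D ≠ L)
    (hDmax : ∀ C ∈ W, D ⊆ C → C = D ∨ C = L) :
    ∑ C ∈ W.filter (fun C => C ⊂ L), (-(μ C : ℝ)) • Φ (C ∩ D) = Φ D := by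
  classical
  have hDL' : D ⊂ L := (hsub D hD).ssubset_of_ne hDL
  -- the coefficient of each fiber
  set N : Finset α → ℝ :=
    fun E => ∑ C ∈ W.filter (fun C => C ⊂ L ∧ C ∩ D = E), (-(μ C : ℝ)) with hNdef
  -- Step 1: cumulative sums of -μ over upsets equal 1
  have hT : ∀ E ∈ W, E ⊆ D →
      ∑ C ∈ W.filter (fun C => C ⊂ L ∧ E ⊆ C), (-(μ C : ℝ)) = 1 := by
    intro E hE hED
    have hEL : E ⊂ L := Finset.ssubset_of_subset_of_ssubset hED hDL'
    have h0 := hμ.2 E hE hEL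
    have hLmem : L ∈ W.filter (fun Z => E ⊆ Z ∧ Z ⊆ L) := by
      simp [Finset.mem_filter, hL, hEL.subset]
    have herase : (W.filter (fun Z => E ⊆ Z ∧ Z ⊆ L)).erase L
        = W.filter (fun C => C ⊂ L ∧ E ⊆ C) := by
      ext Z
      simp only [Finset.mem_erase, Finset.mem_filter, Finset.ssubset_iff_subset_ne]
      constructor
      · rintro ⟨hne, hZ, hEZ, hZL⟩; exact ⟨hZ, ⟨hZL, hne⟩, hEZ⟩
      · rintro ⟨hZ, ⟨hZL, hne⟩, hEZ⟩; exact ⟨hne, hZ, hEZ, hZL⟩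
    have hsplit := Finset.add_sum_erase _ μ hLmem
    rw [h0, hμ.1, herase] at hsplit
    have hint : ∑ C ∈ W.filter (fun C => C ⊂ L ∧ E ⊆ C), μ C = -1 := by linarith
    calc ∑ C ∈ W.filter (fun C => C ⊂ L ∧ E ⊆ C), (-(μ C : ℝ))
        = -((∑ C ∈ W.filter (fun C => C ⊂ L ∧ E ⊆ C), μ C : ℤ) : ℝ) := by
          push_cast [Finset.sum_neg_distrib]; ring
      _ = 1 := by rw [hint]; norm_num
  -- Step 2: cumulative sums of N equal 1
  have hTN : ∀ E ∈ W, E ⊆ D →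
      ∑ E' ∈ W.filter (fun E' => E' ⊆ D ∧ E ⊆ E'), N E' = 1 := by
    intro E hE hED
    rw [← hT E hE hED]
    have hmaps : ∀ C ∈ W.filter (fun C => C ⊂ L ∧ E ⊆ C),
        C ∩ D ∈ W.filter (fun E' => E' ⊆ D ∧ E ⊆ E') := by
      intro C hC
      simp only [Finset.mem_filter] at hC ⊢
      have hECD : E ⊆ C ∩ D := Finset.subset_inter hC.2.2 hED
      rcases (C ∩ D).eq_empty_or_nonempty with hemp | hne
      · have : E = ∅ := Finset.subset_empty.mp (hemp ▸ hECD)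
        exact ⟨by rw [hemp, ← this]; exact hE, Finset.inter_subset_right, hECD⟩
      · exact ⟨hclosed C hC.1 D hD hne, Finset.inter_subset_right, hECD⟩
    rw [← Finset.sum_fiberwise_of_maps_to hmaps (fun C => (-(μ C : ℝ)))]
    refine Finset.sum_congr rfl ?_
    intro E' hE'
    simp only [Finset.mem_filter] at hE'
    rw [hNdef]
    refine Finset.sum_congr ?_ (fun _ _ => rfl)
    ext C
    simp only [Finset.mem_filter, and_assoc]
    constructor
    · rintro ⟨hC, hCL, hCD⟩
      refine ⟨hC, hCL, ?_, hCD⟩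
      rw [← hCD] at hE'
      exact hE'.2.2.trans Finset.inter_subset_left
    · rintro ⟨hC, hCL, _, hCD⟩; exact ⟨hC, hCL, hCD⟩
  -- Step 3: N E = δ_{E D} by downward induction
  have hN : ∀ n : ℕ, ∀ E ∈ W, E ⊆ D → D.card - E.card ≤ n →
      N E = if E = D then 1 else 0 := by
    intro n
    induction n with
    | zero =>
      intro E hE hED hcard
      have hEeq : E = D := by
        by_contra hne
        have : E ⊂ D := hED.ssubset_of_ne hne
        have := Finset.card_lt_card this
        omega
      rw [hEeq, if_pos rfl]
      have := hTN D hD (by rfl)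
      have hfe : W.filter (fun E' => E' ⊆ D ∧ D ⊆ E') = {D} := by
        ext Z
        simp only [Finset.mem_filter, Finset.mem_singleton]
        constructor
        · rintro ⟨hZ, hZD, hDZ⟩; exact Finset.Subset.antisymm hZD hDZ
        · rintro rfl; exact ⟨hD, by rfl, by rfl⟩
      rwa [hfe, Finset.sum_singleton] at this
    | succ m ih =>
      intro E hE hED hcard
      by_cases hEeq : E = D
      · rw [hEeq, if_pos rfl]
        have := hTN D hD (by rfl)
        have hfe : W.filter (fun E' => E' ⊆ D ∧ D ⊆ E') = {D} := by
          ext Z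
          simp only [Finset.mem_filter, Finset.mem_singleton]
          constructor
          · rintro ⟨hZ, hZD, hDZ⟩; exact Finset.Subset.antisymm hZD hDZ
          · rintro rfl; exact ⟨hD, by rfl, by rfl⟩
        rwa [hfe, Finset.sum_singleton] at this
      · simp only [if_neg hEeq]
        have h1 := hTN E hE hED
        have hEmem : E ∈ W.filter (fun E' => E' ⊆ D ∧ E ⊆ E') := by
          simp [Finset.mem_filter, hE, hED]
        have hsplit := Finset.add_sum_erase _ N hEmem
        rw [h1] at hsplit
        have hrest : ∑ E' ∈ (W.filter (fun E' => E' ⊆ D ∧ E ⊆ E')).erase E, N E' = 1 := by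
          have hcongr : ∀ E' ∈ (W.filter (fun E' => E' ⊆ D ∧ E ⊆ E')).erase E,
              N E' = if E' = D then 1 else 0 := by
            intro E' hE'
            simp only [Finset.mem_erase, Finset.mem_filter] at hE'
            have hss : E ⊂ E' := hE'.2.2.2.ssubset_of_ne (Ne.symm hE'.1)
            have hc1 : E.card < E'.card := Finset.card_lt_card hss
            have hc2 : E'.card ≤ D.card := Finset.card_le_card hE'.2.2.1
            have hc3 : E.card < D.card :=
              Finset.card_lt_card (hED.ssubset_of_ne hEeq)
            exact ih E' hE'.2.1 hE'.2.2.1 (by omega)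
          rw [Finset.sum_congr rfl hcongr, Finset.sum_ite_eq' _ D (fun _ => (1:ℝ))]
          have hDmem : D ∈ (W.filter (fun E' => E' ⊆ D ∧ E ⊆ E')).erase E := by
            simp only [Finset.mem_erase, Finset.mem_filter]
            exact ⟨Ne.symm hEeq, hD, by rfl, hED⟩
          rw [if_pos hDmem]
        linarith
  -- Step 4: assemble
  have hkey : ∀ E, E ∈ W → E ⊆ D → N E = if E = D then 1 else 0 := fun E hE hED =>
    hN D.card E hE hED (by omega)
  rw [← Finset.sum_filter_add_sum_filter_not (W.filter (fun C => C ⊂ L))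
      (fun C => (C ∩ D).Nonempty) (fun C => (-(μ C : ℝ)) • Φ (C ∩ D))]
  have hzero : ∑ C ∈ (W.filter (fun C => C ⊂ L)).filter (fun C => ¬(C ∩ D).Nonempty),
      (-(μ C : ℝ)) • Φ (C ∩ D) = 0 := by
    refine Finset.sum_eq_zero ?_
    intro C hC
    simp only [Finset.mem_filter, Finset.not_nonempty_iff_eq_empty] at hC
    rw [hC.2, hΦ, smul_zero]
  rw [hzero, add_zero]
  have hmaps : ∀ C ∈ (W.filter (fun C => C ⊂ L)).filter (fun C => (C ∩ D).Nonempty),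
      C ∩ D ∈ W.filter (fun E => E ⊆ D) := by
    intro C hC
    simp only [Finset.mem_filter] at hC ⊢
    exact ⟨hclosed C hC.1.1 D hD hC.2, Finset.inter_subset_right⟩
  rw [← Finset.sum_fiberwise_of_maps_to hmaps (fun C => (-(μ C : ℝ)) • Φ (C ∩ D))]
  have hinner : ∀ E ∈ W.filter (fun E => E ⊆ D),
      (∑ C ∈ ((W.filter (fun C => C ⊂ L)).filter
          (fun C => (C ∩ D).Nonempty)).filter (fun C => C ∩ D = E),
        (-(μ C : ℝ)) • Φ (C ∩ D)) = if E = D then Φ E else 0 := by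
    intro E hEm
    simp only [Finset.mem_filter] at hEm
    have hstep : (∑ C ∈ ((W.filter (fun C => C ⊂ L)).filter
          (fun C => (C ∩ D).Nonempty)).filter (fun C => C ∩ D = E),
        (-(μ C : ℝ)) • Φ (C ∩ D))
        = (∑ C ∈ ((W.filter (fun C => C ⊂ L)).filter
          (fun C => (C ∩ D).Nonempty)).filter (fun C => C ∩ D = E),
        (-(μ C : ℝ))) • Φ E := by
      rw [Finset.sum_smul]
      refine Finset.sum_congr rfl ?_
      intro C hC
      simp only [Finset.mem_filter] at hC
      rw [hC.2]
    rw [hstep]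
    rcases E.eq_empty_or_nonempty with hemp | hne
    · subst hemp
      have : ((W.filter (fun C => C ⊂ L)).filter
          (fun C => (C ∩ D).Nonempty)).filter (fun C => C ∩ D = ∅) = ∅ := by
        ext C
        simp only [Finset.mem_filter, Finset.notMem_empty, iff_false]
        rintro ⟨⟨_, hne'⟩, heq⟩
        rw [heq] at hne'
        exact Finset.not_nonempty_empty hne'
      rw [this, Finset.sum_empty, zero_smul]
      rw [hΦ]
      simp
    · have hcoef : (∑ C ∈ ((W.filter (fun C => C ⊂ L)).filter
          (fun C => (C ∩ D).Nonempty)).filter (fun C => C ∩ D = E),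
          (-(μ C : ℝ))) = N E := by
        rw [hNdef]
        congr 1
        ext C
        simp only [Finset.mem_filter]
        constructor
        · rintro ⟨⟨⟨hC, hCL⟩, _⟩, heq⟩; exact ⟨hC, hCL, heq⟩
        · rintro ⟨hC, hCL, heq⟩; exact ⟨⟨⟨hC, hCL⟩, heq ▸ hne⟩, heq⟩
      rw [hcoef, hkey E hEm.1 hEm.2]
      by_cases hEeq : E = D
      · rw [if_pos hEeq, if_pos hEeq, one_smul]
      · rw [if_neg hEeq, if_neg hEeq, zero_smul]
  rw [Finset.sum_congr rfl hinner, Finset.sum_ite_eq' _ D Φ]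
  rw [if_pos (by simp [Finset.mem_filter, hD])]
end
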